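/- arXiv:1904.06547 — 3 statements merged into one kernel-verified Lean document; each statement's English description precedes it below -/
import Mathlib

section
/- Consider the Euler discretization x(k+1) = x(k) + ε f(k, x(k)), ε > 0, whose trajectories evolve on a compact convex invariant set Ω ⊂ ℝⁿ. Suppose f is C¹ in its second argument, the entries of the Jacobian (∂f/∂x)(k,a) are bounded uniformly over k ∈ ℕ and a ∈ Ω, and for every k ∈ ℕ and a ∈ Ω the matrix (∂f/∂x)(k,a) is tridiagonal with strictly positive entries on the super- and sub-diagonal, these off-diagonal entries being bounded below by a positive constant uniformly in k and a. Then there exists ε₀ > 0 such that for every ε ∈ (0, ε₀), the matrix F(k,a,b) := ∫₀¹ ( I + ε (∂f/∂x)(k, ra + (1−r)b) ) dr is oscillatory for all k ∈ ℕ and all a, b ∈ Ω. -/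
/-!
Averaging the Jacobian over the segment from `b` to `a` preserves its tridiagonal pattern, the
bound `M` on its entries and the positivity of its off-diagonal entries, so `F = 1 + ε G` is
tridiagonal with diagonal at least `3/4` and products of opposite off-diagonal entries at most
`1/16` once `ε M ≤ 1/4`. Gaussian elimination on such a matrix keeps every pivot at least `1/2`,
so `F = L U` with `L` lower and `U` upper bidiagonal, both positive on their two diagonals.
Minors of bidiagonal matrices are products of entries, so by Cauchy–Binet `F` is TN, and its
minor with row tuple `I` and column tuple `I'` is positive whenever `I` and `I'` differ by at
most one in each entry. Moving `I` one step towards `J` at a time, Cauchy–Binet shows that the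
`(I, J)` minor of `F ^ m` is positive as soon as `I` and `J` differ by at most `m` in each entry,
so `F ^ (n + 1)` is TP.
-/

open Matrix MeasureTheory Filter Topology

/-- A matrix is totally positive if every minor is strictly positive. -/
def IsTP {n m : ℕ} (A : Matrix (Fin n) (Fin m) ℝ) : Prop :=
  ∀ (r : ℕ) (rows : Fin r → Fin n) (cols : Fin r → Fin m),
    StrictMono rows → StrictMono cols → 0 < (A.submatrix rows cols).det

/-- A matrix is totally nonnegative if every minor is nonnegative. -/
def IsTN {n m : ℕ} (A : Matrix (Fin n) (Fin m) ℝ) : Prop :=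
  ∀ (r : ℕ) (rows : Fin r → Fin n) (cols : Fin r → Fin m),
    StrictMono rows → StrictMono cols → 0 ≤ (A.submatrix rows cols).det

/-- A square matrix is oscillatory if it is TN and some positive power of it is TP. -/
def IsOsc {n : ℕ} (A : Matrix (Fin n) (Fin n) ℝ) : Prop :=
  IsTN A ∧ ∃ k : ℕ, 0 < k ∧ IsTP (A ^ k)

/-- The Jacobian matrix of a map `g : ℝⁿ → ℝⁿ` at a point `x`. -/
noncomputable def jac {n : ℕ} (g : (Fin n → ℝ) → (Fin n → ℝ)) (x : Fin n → ℝ) :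
    Matrix (Fin n) (Fin n) ℝ :=
  Matrix.of fun i j => fderiv ℝ g x (Pi.single j 1) i

open Finset

section CauchyBinet

variable {R : Type*} [CommRing R]

open scoped Classical in
noncomputable def strictMonoTuples (r N : ℕ) : Finset (Fin r → Fin N) :=
  univ.filter StrictMono

theorem mem_strictMonoTuples {r N : ℕ} {g : Fin r → Fin N} :
    g ∈ strictMonoTuples r N ↔ StrictMono g := by
  simp [strictMonoTuples]

theorem det_mul_eq_sum_det_submatrix_mul_prod {r N : ℕ} (X : Matrix (Fin r) (Fin N) R)
    (Y : Matrix (Fin N) (Fin r) R) :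
    (X * Y).det = ∑ p : Fin r → Fin N, (X.submatrix id p).det * ∏ i, Y (p i) i := by
  rw [det_apply']
  simp only [mul_apply, prod_univ_sum, Fintype.piFinset_univ, mul_sum]
  rw [sum_comm]
  refine sum_congr rfl fun p _ => ?_
  rw [det_apply', sum_mul]
  refine sum_congr rfl fun σ _ => ?_
  simp only [prod_mul_distrib, submatrix_apply, id_eq]
  ring

theorem sort_comp_perm {r N : ℕ} {g : Fin r → Fin N} (hg : StrictMono g) (σ : Equiv.Perm (Fin r)) :
    Tuple.sort (g ∘ σ) = σ⁻¹ := by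
  refine (Tuple.eq_sort_iff.mpr ⟨?_, fun i j hij h => ?_⟩).symm
  · simpa [Function.comp_def] using hg.monotone
  · simp only [Function.comp_apply, ← Equiv.Perm.mul_apply, mul_inv_cancel,
      Equiv.Perm.one_apply] at h
    exact absurd (hg.injective h) hij.ne

theorem sum_injective_eq_sum_strictMono_perm {r N : ℕ} (F : (Fin r → Fin N) → R) :
    ∑ p ∈ univ.filter Function.Injective, F p
      = ∑ g ∈ strictMonoTuples r N, ∑ σ : Equiv.Perm (Fin r), F (g ∘ σ) := by
  rw [← sum_product']
  refine (sum_bij' (fun q _ => q.1 ∘ q.2) (fun p _ => (p ∘ Tuple.sort p, (Tuple.sort p)⁻¹))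
    ?_ ?_ ?_ ?_ ?_).symm
  · rintro ⟨g, σ⟩ hq
    simp only [mem_product, mem_strictMonoTuples] at hq
    simpa using hq.1.injective.comp σ.injective
  · intro p hp
    simp only [mem_filter, mem_univ, true_and] at hp
    simpa [mem_strictMonoTuples] using
      (Tuple.monotone_sort p).strictMono_of_injective (hp.comp (Tuple.sort p).injective)
  · rintro ⟨g, σ⟩ hq
    simp only [mem_product, mem_strictMonoTuples] at hq
    simp [sort_comp_perm hq.1, Function.comp_assoc]
  · intro p _
    ext1 i
    simp
  · intros; rfl

/-- The Cauchy–Binet formula. -/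
theorem det_mul_eq_sum_strictMonoTuples {r N : ℕ} (X : Matrix (Fin r) (Fin N) R)
    (Y : Matrix (Fin N) (Fin r) R) :
    (X * Y).det = ∑ g ∈ strictMonoTuples r N, (X.submatrix id g).det * (Y.submatrix g id).det := by
  rw [det_mul_eq_sum_det_submatrix_mul_prod,
    ← sum_filter_add_sum_filter_not univ Function.Injective]
  have hnoninj : ∑ p ∈ univ.filter (fun p : Fin r → Fin N => ¬ Function.Injective p),
      (X.submatrix id p).det * ∏ i, Y (p i) i = 0 := by
    refine sum_eq_zero fun p hp => ?_
    obtain ⟨i, j, hij, hne⟩ := Function.not_injective_iff.mp (mem_filter.mp hp).2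
    rw [det_zero_of_column_eq hne (fun k => by simp [hij]), zero_mul]
  rw [hnoninj, add_zero, sum_injective_eq_sum_strictMono_perm]
  refine sum_congr rfl fun g _ => ?_
  rw [det_apply' (Y.submatrix g id), mul_sum]
  refine sum_congr rfl fun σ _ => ?_
  have hcols : X.submatrix id (g ∘ σ) = (X.submatrix id g).submatrix id σ := rfl
  rw [hcols, det_permute']
  simp only [submatrix_apply, id_eq, Function.comp_apply]
  ring

theorem det_submatrix_mul {m N p r : ℕ} (A : Matrix (Fin m) (Fin N) R)
    (B : Matrix (Fin N) (Fin p) R) (I : Fin r → Fin m) (J : Fin r → Fin p) :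
    ((A * B).submatrix I J).det
      = ∑ g ∈ strictMonoTuples r N, (A.submatrix I g).det * (B.submatrix g J).det := by
  rw [submatrix_mul _ _ _ id _ Function.bijective_id, det_mul_eq_sum_strictMonoTuples]
  rfl

end CauchyBinet

section TotallyNonnegative

variable {m n p : ℕ}

theorem IsTN.transpose {A : Matrix (Fin m) (Fin n) ℝ} (hA : IsTN A) : IsTN Aᵀ :=
  fun r I J hI hJ => by
    rw [← transpose_submatrix, det_transpose]
    exact hA r J I hJ hI

theorem IsTN.mul {A : Matrix (Fin m) (Fin n) ℝ} {B : Matrix (Fin n) (Fin p) ℝ} (hA : IsTN A)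
    (hB : IsTN B) : IsTN (A * B) := fun r I J hI hJ => by
  rw [det_submatrix_mul]
  exact sum_nonneg fun g hg =>
    mul_nonneg (hA r I g hI (mem_strictMonoTuples.mp hg)) (hB r g J (mem_strictMonoTuples.mp hg) hJ)

theorem IsTN.det_submatrix_mul_pos {A : Matrix (Fin m) (Fin n) ℝ} {B : Matrix (Fin n) (Fin p) ℝ}
    (hA : IsTN A) (hB : IsTN B) {r : ℕ} {I : Fin r → Fin m} {J : Fin r → Fin p}
    {g : Fin r → Fin n} (hI : StrictMono I) (hJ : StrictMono J) (hg : StrictMono g)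
    (hAg : 0 < (A.submatrix I g).det) (hBg : 0 < (B.submatrix g J).det) :
    0 < ((A * B).submatrix I J).det := by
  rw [det_submatrix_mul]
  refine lt_of_lt_of_le (mul_pos hAg hBg) (single_le_sum (f := fun g =>
    (A.submatrix I g).det * (B.submatrix g J).det) (fun g hg => ?_) (mem_strictMonoTuples.mpr hg))
  exact mul_nonneg (hA r I g hI (mem_strictMonoTuples.mp hg))
    (hB r g J (mem_strictMonoTuples.mp hg) hJ)

end TotallyNonnegative

section Bidiagonal

variable {n : ℕ}

theorem det_submatrix_eq_prod_of_lowerBidiagonal {R : Type*} [CommRing R]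
    {L : Matrix (Fin n) (Fin n) R} (hL : ∀ i j : Fin n, (i : ℕ) < j ∨ (j : ℕ) + 1 < i → L i j = 0)
    {r : ℕ} {I J : Fin r → Fin n} (hI : StrictMono I) (hJ : StrictMono J) :
    (L.submatrix I J).det = ∏ k, L (I k) (J k) := by
  rw [det_apply', sum_eq_single 1 (fun σ _ hσ => ?_) (by simp)]
  · simp
  -- a nonzero term of the Leibniz expansion forces `σ` to be monotone
  by_contra hne
  have hband : ∀ k, (J k : ℕ) ≤ I (σ k) ∧ (I (σ k) : ℕ) ≤ J k + 1 := fun k => by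
    by_contra hk
    exact hne (by rw [prod_eq_zero (mem_univ k) (hL _ _ (by omega)), mul_zero])
  have hσ_mono : StrictMono σ := fun a b hab => by
    have hJab : (J a : ℕ) < J b := hJ hab
    have hle : I (σ a) ≤ I (σ b) := by
      rw [Fin.le_iff_val_le_val]; have := hband a; have := hband b; omega
    exact hI.lt_iff_lt.mp (hle.lt_of_ne (hI.injective.ne (σ.injective.ne hab.ne)))
  exact hσ (Equiv.ext fun k => congrFun hσ_mono.eq_id k)

theorem isTN_of_lowerBidiagonal {L : Matrix (Fin n) (Fin n) ℝ}
    (hL : ∀ i j : Fin n, (i : ℕ) < j ∨ (j : ℕ) + 1 < i → L i j = 0) (h0 : ∀ i j, 0 ≤ L i j) :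
    IsTN L := fun _ _ _ hI hJ => by
  rw [det_submatrix_eq_prod_of_lowerBidiagonal hL hI hJ]
  exact prod_nonneg fun k _ => h0 _ _

theorem isTN_one : IsTN (1 : Matrix (Fin n) (Fin n) ℝ) :=
  isTN_of_lowerBidiagonal (fun i j h => one_apply_ne (by rintro rfl; omega))
    (fun i j => by by_cases h : i = j <;> simp [one_apply, h])

theorem IsTN.pow {A : Matrix (Fin n) (Fin n) ℝ} (hA : IsTN A) (m : ℕ) : IsTN (A ^ m) := by
  induction m with
  | zero => exact pow_zero A ▸ isTN_one
  | succ m ih => exact pow_succ A m ▸ ih.mul hA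

structure IsPosLowerBidiagonal (L : Matrix (Fin n) (Fin n) ℝ) : Prop where
  pos : ∀ i j : Fin n, (j : ℕ) ≤ i → (i : ℕ) ≤ j + 1 → 0 < L i j
  eq_zero : ∀ i j : Fin n, (i : ℕ) < j ∨ (j : ℕ) + 1 < i → L i j = 0

namespace IsPosLowerBidiagonal

variable {L : Matrix (Fin n) (Fin n) ℝ} (hL : IsPosLowerBidiagonal L)
include hL

theorem isTN : IsTN L :=
  isTN_of_lowerBidiagonal hL.eq_zero fun i j => by
    by_cases h : (j : ℕ) ≤ i ∧ (i : ℕ) ≤ j + 1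
    · exact (hL.pos i j h.1 h.2).le
    · exact (hL.eq_zero i j (by omega)).ge

theorem det_submatrix_pos {r : ℕ} {I J : Fin r → Fin n} (hI : StrictMono I) (hJ : StrictMono J)
    (hIJ : ∀ k, (J k : ℕ) ≤ I k ∧ (I k : ℕ) ≤ J k + 1) : 0 < (L.submatrix I J).det := by
  rw [det_submatrix_eq_prod_of_lowerBidiagonal hL.eq_zero hI hJ]
  exact prod_pos fun k _ => hL.pos _ _ (hIJ k).1 (hIJ k).2

end IsPosLowerBidiagonal

end Bidiagonal

section Oscillatory

variable {n r : ℕ}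

def IsWithin (m : ℕ) (I J : Fin r → Fin n) : Prop :=
  ∀ k, (I k : ℕ) ≤ J k + m ∧ (J k : ℕ) ≤ I k + m

theorem IsPosLowerBidiagonal.det_submatrix_mul_pos {L U : Matrix (Fin n) (Fin n) ℝ}
    (hL : IsPosLowerBidiagonal L) (hU : IsPosLowerBidiagonal Uᵀ) {I J : Fin r → Fin n}
    (hI : StrictMono I) (hJ : StrictMono J) (hIJ : IsWithin 1 I J) :
    0 < ((L * U).submatrix I J).det := by
  -- the Cauchy–Binet term with middle tuple `min I J` is already positive
  have hg : StrictMono fun k => min (I k) (J k) := fun a b hab => min_lt_min (hI hab) (hJ hab)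
  refine hL.isTN.det_submatrix_mul_pos (transpose_transpose U ▸ hU.isTN.transpose) hI hJ hg
    (hL.det_submatrix_pos hI hg fun k => ?_) ?_
  · have := hIJ k; simp only [Fin.coe_min]; omega
  · rw [← det_transpose, transpose_submatrix]
    exact hU.det_submatrix_pos hJ hg fun k => by have := hIJ k; simp only [Fin.coe_min]; omega

def stepToward (I J : Fin r → Fin n) : Fin r → Fin n :=
  fun k => ⟨min (max (J k) (I k - 1)) (I k + 1), by have := (I k).isLt; have := (J k).isLt; omega⟩

theorem strictMono_stepToward {I J : Fin r → Fin n} (hI : StrictMono I) (hJ : StrictMono J) :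
    StrictMono (stepToward I J) := fun a b hab => by
  have hIab : (I a : ℕ) < I b := hI hab
  have hJab : (J a : ℕ) < J b := hJ hab
  simp only [stepToward, Fin.lt_def]
  omega

theorem isWithin_one_stepToward (I J : Fin r → Fin n) : IsWithin 1 I (stepToward I J) :=
  fun k => by simp only [stepToward]; omega

theorem IsWithin.stepToward {m : ℕ} {I J : Fin r → Fin n} (h : IsWithin (m + 1) I J) :
    IsWithin m (stepToward I J) J :=
  fun k => by have := h k; simp only [_root_.stepToward]; omega

theorem det_submatrix_pow_pos {A : Matrix (Fin n) (Fin n) ℝ} (hA : IsTN A)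
    (hadj : ∀ (r : ℕ) (I J : Fin r → Fin n), StrictMono I → StrictMono J → IsWithin 1 I J →
      0 < (A.submatrix I J).det)
    (m : ℕ) {I J : Fin r → Fin n} (hI : StrictMono I) (hJ : StrictMono J) (hIJ : IsWithin m I J) :
    0 < ((A ^ m).submatrix I J).det := by
  induction m generalizing I with
  | zero =>
    obtain rfl : I = J := funext fun k => Fin.ext (by have := hIJ k; omega)
    simp [submatrix_one _ hI.injective]
  | succ m ih =>
    rw [pow_succ']
    exact hA.det_submatrix_mul_pos (hA.pow m) hI hJ (strictMono_stepToward hI hJ)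
      (hadj r I _ hI (strictMono_stepToward hI hJ) (isWithin_one_stepToward I J))
      (ih (strictMono_stepToward hI hJ) hIJ.stepToward)

theorem isOsc_of_isTN_of_isWithin_one {A : Matrix (Fin n) (Fin n) ℝ} (hA : IsTN A)
    (hadj : ∀ (r : ℕ) (I J : Fin r → Fin n), StrictMono I → StrictMono J → IsWithin 1 I J →
      0 < (A.submatrix I J).det) :
    IsOsc A :=
  ⟨hA, n + 1, n.succ_pos, fun _ I J hI hJ => det_submatrix_pow_pos hA hadj _ hI hJ fun k => by
    have := (I k).isLt; have := (J k).isLt; omega⟩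

theorem IsPosLowerBidiagonal.isOsc_mul {L U : Matrix (Fin n) (Fin n) ℝ}
    (hL : IsPosLowerBidiagonal L) (hU : IsPosLowerBidiagonal Uᵀ) : IsOsc (L * U) :=
  isOsc_of_isTN_of_isWithin_one (hL.isTN.mul (transpose_transpose U ▸ hU.isTN.transpose))
    fun _ _ _ hI hJ hIJ => hL.det_submatrix_mul_pos hU hI hJ hIJ

end Oscillatory

section Tridiagonal

variable {n : ℕ}

def IsTridiagonal (A : Matrix (Fin n) (Fin n) ℝ) : Prop :=
  ∀ i j : Fin n, (i : ℕ) + 2 ≤ j ∨ (j : ℕ) + 2 ≤ i → A i j = 0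

/-- The pivots of Gaussian elimination without pivoting on a tridiagonal matrix. -/
noncomputable def tridiagonalPivot (A : Matrix (Fin n) (Fin n) ℝ) (i : Fin n) : ℝ :=
  if h : (i : ℕ) = 0 then A i i
  else
    A i i - A i ⟨i - 1, by omega⟩ * A ⟨i - 1, by omega⟩ i / tridiagonalPivot A ⟨i - 1, by omega⟩
termination_by (i : ℕ)
decreasing_by omega

theorem tridiagonalPivot_of_val_eq_zero (A : Matrix (Fin n) (Fin n) ℝ) {i : Fin n}
    (hi : (i : ℕ) = 0) : tridiagonalPivot A i = A i i := by
  rw [tridiagonalPivot.eq_1, dif_pos hi]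

theorem tridiagonalPivot_of_val_eq_succ (A : Matrix (Fin n) (Fin n) ℝ) {i j : Fin n}
    (hij : (i : ℕ) = j + 1) :
    tridiagonalPivot A i = A i i - A i j * A j i / tridiagonalPivot A j := by
  have hj : (⟨i - 1, by omega⟩ : Fin n) = j := Fin.ext (by simp only; omega)
  rw [tridiagonalPivot.eq_1, dif_neg (by omega), hj]

theorem half_le_tridiagonalPivot {A : Matrix (Fin n) (Fin n) ℝ} (hdiag : ∀ i, 3 / 4 ≤ A i i)
    (hoff : ∀ i j : Fin n, (i : ℕ) = j + 1 → A i j * A j i ≤ 1 / 16) (i : Fin n) :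
    1 / 2 ≤ tridiagonalPivot A i := by
  induction hi : (i : ℕ) generalizing i with
  | zero => rw [tridiagonalPivot_of_val_eq_zero A hi]; linarith [hdiag i]
  | succ m ih =>
    set j : Fin n := ⟨m, by omega⟩
    have hj : 1 / 2 ≤ tridiagonalPivot A j := ih j rfl
    have hquot : A i j * A j i / tridiagonalPivot A j ≤ 1 / 8 := by
      rw [div_le_iff₀ (by linarith)]; nlinarith [hoff i j hi]
    rw [tridiagonalPivot_of_val_eq_succ A (j := j) hi]
    linarith [hdiag i]

noncomputable def tridiagonalLower (A : Matrix (Fin n) (Fin n) ℝ) : Matrix (Fin n) (Fin n) ℝ :=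
  of fun i j => if i = j then 1 else if (i : ℕ) = j + 1 then A i j / tridiagonalPivot A j else 0

noncomputable def tridiagonalUpper (A : Matrix (Fin n) (Fin n) ℝ) : Matrix (Fin n) (Fin n) ℝ :=
  of fun i j => if i = j then tridiagonalPivot A i else if (j : ℕ) = i + 1 then A i j else 0

theorem lower_mul_upper_apply_of_val_eq_zero (A : Matrix (Fin n) (Fin n) ℝ) {i : Fin n}
    (hi : (i : ℕ) = 0) (j : Fin n) :
    (tridiagonalLower A * tridiagonalUpper A) i j = tridiagonalUpper A i j := by
  rw [mul_apply, sum_eq_single i (fun x _ hx => ?_) (by simp)]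
  · simp [tridiagonalLower]
  · simp [tridiagonalLower, Ne.symm hx, hi]

theorem lower_mul_upper_apply_of_val_eq_succ (A : Matrix (Fin n) (Fin n) ℝ) {i p : Fin n}
    (hip : (i : ℕ) = p + 1) (j : Fin n) :
    (tridiagonalLower A * tridiagonalUpper A) i j
      = tridiagonalUpper A i j + A i p / tridiagonalPivot A p * tridiagonalUpper A p j := by
  have hpi : p ≠ i := fun h => by rw [h] at hip; omega
  rw [mul_apply, Fintype.sum_eq_add i p hpi.symm (fun x hx => ?_)]
  · simp [tridiagonalLower, hpi.symm, hip]
  · have : (i : ℕ) ≠ x + 1 := fun h => hx.2 (Fin.ext (by omega))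
    simp [tridiagonalLower, Ne.symm hx.1, this]

theorem IsTridiagonal.eq_lower_mul_upper {A : Matrix (Fin n) (Fin n) ℝ} (hA : IsTridiagonal A)
    (hpiv : ∀ i, tridiagonalPivot A i ≠ 0) :
    A = tridiagonalLower A * tridiagonalUpper A := by
  ext i j
  rcases Nat.eq_zero_or_pos (i : ℕ) with hi | hi
  · rw [lower_mul_upper_apply_of_val_eq_zero A hi]
    obtain rfl | hij := eq_or_ne i j
    · simp [tridiagonalUpper, tridiagonalPivot_of_val_eq_zero A hi]
    · simp only [tridiagonalUpper, of_apply, if_neg hij]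
      split_ifs with h
      · rfl
      · exact hA i j (by rw [Ne, Fin.ext_iff] at hij; omega)
  · obtain ⟨p, hip⟩ : ∃ p : Fin n, (i : ℕ) = p + 1 := ⟨⟨i - 1, by omega⟩, by simp only; omega⟩
    rw [lower_mul_upper_apply_of_val_eq_succ A hip]
    obtain rfl | hij := eq_or_ne i j
    · have hpi : p ≠ i := fun h => by rw [h] at hip; omega
      simp only [tridiagonalUpper, of_apply, if_pos, if_neg hpi, hip]
      rw [tridiagonalPivot_of_val_eq_succ A hip]
      field_simp [hpiv p]
      ring
    · rw [Ne, Fin.ext_iff] at hij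
      obtain hj | rfl | hfar : (j : ℕ) = i + 1 ∨ p = j ∨ ((i : ℕ) + 2 ≤ j ∨ (j : ℕ) + 2 ≤ i) := by
        rw [Fin.ext_iff]; omega
      · simp [tridiagonalUpper, Fin.ext_iff, hj, hip]; omega
      · simp [tridiagonalUpper, Fin.ext_iff, hip, hpiv p]; omega
      · have hpj : (p : ℕ) ≠ j := by omega
        have hjp : (j : ℕ) ≠ p + 1 := by omega
        simp [tridiagonalUpper, Fin.ext_iff, hA i j hfar, hij, hpj, hjp]

theorem isPosLowerBidiagonal_tridiagonalLower {A : Matrix (Fin n) (Fin n) ℝ}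
    (hpiv : ∀ i, 0 < tridiagonalPivot A i) (hsub : ∀ i j : Fin n, (i : ℕ) = j + 1 → 0 < A i j) :
    IsPosLowerBidiagonal (tridiagonalLower A) where
  pos i j h₁ h₂ := by
    obtain rfl | hij := eq_or_ne i j
    · simp [tridiagonalLower]
    · have hi : (i : ℕ) = j + 1 := by rw [Ne, Fin.ext_iff] at hij; omega
      simpa [tridiagonalLower, hij, hi] using div_pos (hsub i j hi) (hpiv j)
  eq_zero i j h := by
    have hij : i ≠ j := by rintro rfl; omega
    have hi : (i : ℕ) ≠ j + 1 := by omega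
    simp [tridiagonalLower, hij, hi]

theorem isPosLowerBidiagonal_tridiagonalUpper_transpose {A : Matrix (Fin n) (Fin n) ℝ}
    (hpiv : ∀ i, 0 < tridiagonalPivot A i) (hsup : ∀ i j : Fin n, (i : ℕ) = j + 1 → 0 < A j i) :
    IsPosLowerBidiagonal (tridiagonalUpper A)ᵀ where
  pos i j h₁ h₂ := by
    obtain rfl | hij := eq_or_ne i j
    · simpa [tridiagonalUpper] using hpiv i
    · have hi : (i : ℕ) = j + 1 := by rw [Ne, Fin.ext_iff] at hij; omega
      simpa [tridiagonalUpper, Ne.symm hij, hi] using hsup i j hi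
  eq_zero i j h := by
    have hij : j ≠ i := by rintro rfl; omega
    have hi : (i : ℕ) ≠ j + 1 := by omega
    simp [tridiagonalUpper, hij, hi]

theorem IsTridiagonal.isOsc {A : Matrix (Fin n) (Fin n) ℝ} (hA : IsTridiagonal A)
    (hdiag : ∀ i, 3 / 4 ≤ A i i)
    (hadj : ∀ i j : Fin n, (i : ℕ) = j + 1 → 0 < A i j ∧ 0 < A j i)
    (hprod : ∀ i j : Fin n, (i : ℕ) = j + 1 → A i j * A j i ≤ 1 / 16) : IsOsc A := by
  have hpiv (i : Fin n) : 0 < tridiagonalPivot A i := by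
    linarith [half_le_tridiagonalPivot hdiag hprod i]
  rw [hA.eq_lower_mul_upper fun i => (hpiv i).ne']
  exact (isPosLowerBidiagonal_tridiagonalLower hpiv fun i j h => (hadj i j h).1).isOsc_mul
    (isPosLowerBidiagonal_tridiagonalUpper_transpose hpiv fun i j h => (hadj i j h).2)

theorem IsTridiagonal.isOsc_one_add_smul {G : Matrix (Fin n) (Fin n) ℝ} (hG : IsTridiagonal G)
    (hadj : ∀ i j : Fin n, (i : ℕ) = j + 1 → 0 < G i j ∧ 0 < G j i) {M ε : ℝ}
    (hM : ∀ i j, |G i j| ≤ M) (hε : 0 < ε) (hεM : ε * M ≤ 1 / 4) :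
    IsOsc (1 + ε • G) := by
  have hbound (i j : Fin n) : ε * |G i j| ≤ 1 / 4 :=
    (mul_le_mul_of_nonneg_left (hM i j) hε.le).trans hεM
  refine IsTridiagonal.isOsc (fun i j h => ?_) (fun i => ?_) (fun i j h => ?_) (fun i j h => ?_)
  · have hij : i ≠ j := by rintro rfl; omega
    simp [one_apply_ne hij, hG i j h]
  · have := neg_abs_le (G i i)
    have := hbound i i
    simp only [Matrix.add_apply, one_apply_eq, Matrix.smul_apply, smul_eq_mul]
    nlinarith
  · have hij : i ≠ j := by rintro rfl; omega
    simpa [one_apply_ne hij, one_apply_ne hij.symm] using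
      And.intro (mul_pos hε (hadj i j h).1) (mul_pos hε (hadj i j h).2)
  · have hij : i ≠ j := by rintro rfl; omega
    simp only [Matrix.add_apply, one_apply_ne hij, one_apply_ne hij.symm, Matrix.smul_apply,
      smul_eq_mul, zero_add]
    have h₁ := hbound i j
    have h₂ := hbound j i
    rw [abs_of_pos (hadj i j h).1] at h₁
    rw [abs_of_pos (hadj i j h).2] at h₂
    have := mul_pos hε (hadj i j h).1
    have := mul_pos hε (hadj i j h).2
    nlinarith

end Tridiagonal

theorem intervalIntegral_mem_Icc_of_continuous {g : ℝ → ℝ} (hg : Continuous g) {lo hi : ℝ}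
    (h : ∀ r ∈ Set.Icc (0 : ℝ) 1, g r ∈ Set.Icc lo hi) :
    (∫ r in (0 : ℝ)..1, g r) ∈ Set.Icc lo hi := by
  constructor
  · simpa using intervalIntegral.integral_mono_on zero_le_one intervalIntegrable_const
      (hg.intervalIntegrable (μ := volume) 0 1) fun r hr => (h r hr).1
  · simpa using intervalIntegral.integral_mono_on zero_le_one
      (hg.intervalIntegrable (μ := volume) 0 1) intervalIntegrable_const fun r hr => (h r hr).2

section SegmentAverage

variable {n : ℕ}

noncomputable def segmentAverage (F : (Fin n → ℝ) → Matrix (Fin n) (Fin n) ℝ) (a b : Fin n → ℝ) :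
    Matrix (Fin n) (Fin n) ℝ :=
  of fun i j => ∫ r in (0 : ℝ)..1, F (r • a + (1 - r) • b) i j

variable {F : (Fin n → ℝ) → Matrix (Fin n) (Fin n) ℝ}

theorem segmentAverage_apply_mem_Icc {Ω : Set (Fin n → ℝ)} (hΩ : Convex ℝ Ω) {a b : Fin n → ℝ}
    (ha : a ∈ Ω) (hb : b ∈ Ω) {i j : Fin n} (hF : Continuous fun x => F x i j) {lo hi : ℝ}
    (h : ∀ x ∈ Ω, F x i j ∈ Set.Icc lo hi) : segmentAverage F a b i j ∈ Set.Icc lo hi :=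
  intervalIntegral_mem_Icc_of_continuous (hF.comp (by fun_prop)) fun r hr =>
    h _ (hΩ ha hb hr.1 (by linarith [hr.2]) (by ring))

theorem integral_one_add_smul_eq (hF : ∀ i j, Continuous fun x => F x i j) (ε : ℝ)
    (a b : Fin n → ℝ) :
    (of fun i j => ∫ r in (0 : ℝ)..1, (1 + ε • F (r • a + (1 - r) • b)) i j)
      = 1 + ε • segmentAverage F a b := by
  ext i j
  have hint : IntervalIntegrable (fun r : ℝ => F (r • a + (1 - r) • b) i j) volume 0 1 :=
    ((hF i j).comp (by fun_prop)).intervalIntegrable 0 1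
  simp only [of_apply, Matrix.add_apply, Matrix.smul_apply, smul_eq_mul]
  rw [intervalIntegral.integral_add intervalIntegrable_const (hint.const_mul ε),
    intervalIntegral.integral_const_mul]
  simp [segmentAverage]

end SegmentAverage

theorem continuous_jac_apply {n : ℕ} {g : (Fin n → ℝ) → (Fin n → ℝ)} (hg : ContDiff ℝ 1 g)
    (i j : Fin n) : Continuous fun x => jac g x i j :=
  (continuous_apply i).comp ((hg.continuous_fderiv one_ne_zero).clm_apply continuous_const)

theorem stmt9_general (n : ℕ) (Ω : Set (Fin n → ℝ)) (hΩconv : Convex ℝ Ω)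
    (f : ℕ → (Fin n → ℝ) → (Fin n → ℝ)) (hf : ∀ k, ContDiff ℝ 1 (f k))
    (M : ℝ) (hbnd : ∀ k, ∀ a ∈ Ω, ∀ i j : Fin n, |jac (f k) a i j| ≤ M)
    (htri : ∀ k, ∀ a ∈ Ω, ∀ i j : Fin n,
      ((i : ℕ) + 2 ≤ (j : ℕ) ∨ (j : ℕ) + 2 ≤ (i : ℕ)) → jac (f k) a i j = 0)
    (c : ℝ) (hc : 0 < c)
    (hoff : ∀ k, ∀ a ∈ Ω, ∀ i j : Fin n, (j : ℕ) = (i : ℕ) + 1 →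
      c ≤ jac (f k) a i j ∧ c ≤ jac (f k) a j i) :
    ∃ ε₀ > (0:ℝ), ∀ ε : ℝ, 0 < ε → ε < ε₀ → ∀ k, ∀ a ∈ Ω, ∀ b ∈ Ω,
      IsOsc (Matrix.of fun i j =>
        ∫ r in (0:ℝ)..1,
          ((1 : Matrix (Fin n) (Fin n) ℝ) + ε • jac (f k) (r • a + (1 - r) • b)) i j) := by
  refine ⟨1 / (4 * max M 1), by positivity, fun ε hε hεlt k a ha b hb => ?_⟩
  have hG {i j : Fin n} {lo hi : ℝ} (h : ∀ x ∈ Ω, jac (f k) x i j ∈ Set.Icc lo hi) :=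
    segmentAverage_apply_mem_Icc hΩconv ha hb (continuous_jac_apply (hf k) i j) h
  have hGpos {i j : Fin n} (h : ∀ x ∈ Ω, c ≤ jac (f k) x i j) :
      0 < segmentAverage (jac (f k)) a b i j :=
    hc.trans_le (hG fun x hx => ⟨h x hx, (le_abs_self _).trans (hbnd k x hx i j)⟩).1
  rw [integral_one_add_smul_eq (continuous_jac_apply (hf k))]
  refine IsTridiagonal.isOsc_one_add_smul (M := M) (fun i j h => ?_) (fun i j h => ?_)
    (fun i j => abs_le.mpr (hG fun x hx => abs_le.mp (hbnd k x hx i j))) hε ?_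
  · have hzero := hG (i := i) (j := j) (lo := 0) (hi := 0) fun x hx => by simp [htri k x hx i j h]
    exact le_antisymm hzero.2 hzero.1
  · exact ⟨hGpos fun x hx => (hoff k x hx j i h).2, hGpos fun x hx => (hoff k x hx j i h).1⟩
  · rw [lt_div_iff₀ (by positivity)] at hεlt
    nlinarith [le_max_left M 1]

theorem stmt9 (n : ℕ) (Ω : Set (Fin n → ℝ)) (hΩc : IsCompact Ω) (hΩconv : Convex ℝ Ω)
    (f : ℕ → (Fin n → ℝ) → (Fin n → ℝ)) (hf : ∀ k, ContDiff ℝ 1 (f k))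
    (hinv : ∀ ε : ℝ, 0 < ε → ∀ k, ∀ a ∈ Ω, a + ε • f k a ∈ Ω)
    (M : ℝ) (hbnd : ∀ k, ∀ a ∈ Ω, ∀ i j : Fin n, |jac (f k) a i j| ≤ M)
    (htri : ∀ k, ∀ a ∈ Ω, ∀ i j : Fin n,
      ((i : ℕ) + 2 ≤ (j : ℕ) ∨ (j : ℕ) + 2 ≤ (i : ℕ)) → jac (f k) a i j = 0)
    (c : ℝ) (hc : 0 < c)
    (hoff : ∀ k, ∀ a ∈ Ω, ∀ i j : Fin n, (j : ℕ) = (i : ℕ) + 1 →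
      c ≤ jac (f k) a i j ∧ c ≤ jac (f k) a j i) :
    ∃ ε₀ > (0:ℝ), ∀ ε : ℝ, 0 < ε → ε < ε₀ → ∀ k, ∀ a ∈ Ω, ∀ b ∈ Ω,
      IsOsc (Matrix.of fun i j =>
        ∫ r in (0:ℝ)..1,
          ((1 : Matrix (Fin n) (Fin n) ℝ) + ε • jac (f k) (r • a + (1 - r) • b)) i j) :=
  stmt9_general n Ω hΩconv f hf M hbnd htri c hc hoff
end

section
/- Consider the time-invariant system x(k+1) = f(x(k)), where f : ℝⁿ → ℝⁿ is C¹ with Jacobian J(x) := (∂f/∂x)(x), and whose trajectories evolve on a compact convex invariant set Ω ⊂ ℝⁿ. If F(a,b) := ∫₀¹ J(ra + (1−r)b) dr is TP for all a, b ∈ Ω, then every solution emanating from Ω converges to an equilibrium point, i.e., for every a ∈ Ω there exists e ∈ Ω with f(e) = e such that x(k,a) → e as k → ∞. -/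
open Matrix MeasureTheory Filter Topology

/-!
Write `z k = x (k + 1) - x k`. By the fundamental theorem of calculus
`f u - f v = F(u, v) (u - v)`, so `z (k + 1) = F_k z k` with `F_k` totally positive. Totally
positive matrices do not increase the number `S⁻` of sign changes of a vector, and when `S⁻` is
preserved the first coordinate of the image is nonzero and has the sign of the first nonzero
coordinate of the preimage. Hence `S⁻(z k)` is eventually constant, after which the first
coordinate of `x k` is monotone and converges to some `c₀`. The forward orbit of a cluster point `p`
of `x` consists of cluster points, all with first coordinate `c₀`; along the differences
`f^[m + 1] p - f^[m] p` the first coordinate then vanishes, so `S⁻` would drop at every step unless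
`f p = p`. Applied to the differences of two cluster points, the same argument shows that they
coincide.
-/

open Set

variable {N n m : ℕ}

section Chains

def IsAltChain (z : Fin n → ℝ) (p : ℕ) (j : ℕ → Fin n) : Prop :=
  z (j 0) ≠ 0 ∧ ∀ q < p, j q < j (q + 1) ∧ z (j q) * z (j (q + 1)) < 0

/-- The number `S⁻(z)` of sign changes of `z`, zero entries being discarded. -/
noncomputable def signVar (z : Fin n → ℝ) : ℕ := sSup {p | ∃ j, IsAltChain z p j}

variable {z : Fin n → ℝ} {p : ℕ} {j : ℕ → Fin n}

theorem IsAltChain.strictMonoOn (h : IsAltChain z p j) : StrictMonoOn j (Iic p) :=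
  strictMonoOn_Iic_of_lt_succ fun q hq => (h.2 q hq).1

theorem IsAltChain.ne_zero (h : IsAltChain z p j) {q : ℕ} (hq : q ≤ p) : z (j q) ≠ 0 := by
  cases q with
  | zero => exact h.1
  | succ q => exact right_ne_zero_of_mul (h.2 q hq).2.ne

theorem IsAltChain.length_lt (h : IsAltChain z p j) : p < n := by
  have hinj : Function.Injective fun q : Fin (p + 1) => j q := fun q q' hqq' =>
    Fin.ext <| h.strictMonoOn.injOn (Nat.lt_succ_iff.1 q.2) (Nat.lt_succ_iff.1 q'.2) hqq'
  simpa using Fintype.card_le_of_injective _ hinj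

theorem bddAbove_altChain_lengths (z : Fin n → ℝ) : BddAbove {p | ∃ j, IsAltChain z p j} :=
  ⟨n, fun _ ⟨_, hj⟩ => hj.length_lt.le⟩

theorem IsAltChain.le_signVar (h : IsAltChain z p j) : p ≤ signVar z :=
  le_csSup (bddAbove_altChain_lengths z) ⟨j, h⟩

theorem signVar_le (h : ∀ p j, IsAltChain z p j → p ≤ m) : signVar z ≤ m :=
  csSup_le' fun _ ⟨j, hj⟩ => h _ j hj

theorem exists_isAltChain_signVar (hz : z ≠ 0) : ∃ j, IsAltChain z (signVar z) j := by
  obtain ⟨i, hi⟩ := Function.ne_iff.1 hz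
  have hi : IsAltChain z 0 fun _ => i := ⟨hi, fun _ h => absurd h (Nat.not_lt_zero _)⟩
  exact Nat.sSup_mem (s := {p | ∃ j, IsAltChain z p j}) ⟨0, _, hi⟩ (bddAbove_altChain_lengths z)

theorem IsAltChain.pos_mul (h : IsAltChain z p j) {q : ℕ} (hq : q ≤ p) :
    0 < z (j 0) * (-1) ^ q * z (j q) := by
  induction q with
  | zero => simpa using mul_self_pos.2 h.1
  | succ q ih =>
    have := mul_pos (ih (by omega)) (neg_pos.2 (h.2 q hq).2)
    rw [pow_succ]
    nlinarith [mul_self_pos.2 (h.ne_zero (q := q) (by omega))]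

theorem IsAltChain.cons (h : IsAltChain z p j) {i : Fin n} (hi : i < j 0)
    (hs : z i * z (j 0) < 0) : IsAltChain z (p + 1) fun q => if q = 0 then i else j (q - 1) := by
  refine ⟨left_ne_zero_of_mul hs.ne, fun q hq => ?_⟩
  rcases q with _ | q
  · simpa using ⟨hi, hs⟩
  · simpa using h.2 q (by omega)

theorem IsAltChain.snoc (h : IsAltChain z p j) {i : Fin n} (hi : j p < i)
    (hs : z (j p) * z i < 0) : IsAltChain z (p + 1) (Function.update j (p + 1) i) := by
  refine ⟨by simpa using h.1, fun q hq => ?_⟩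
  rcases (Nat.lt_succ_iff.1 hq).lt_or_eq with hq | rfl
  · simpa [Function.update_of_ne (show q ≠ p + 1 by omega),
      Function.update_of_ne (show q + 1 ≠ p + 1 by omega)] using h.2 q hq
  · simpa [Function.update_of_ne (show q ≠ q + 1 by omega)] using ⟨hi, hs⟩

theorem IsAltChain.update (h : IsAltChain z p j) {k : ℕ} (hk : k ≤ p) {i : Fin n}
    (hlo : ∀ q, q + 1 = k → j q < i) (hhi : k < p → i < j (k + 1))
    (hs : 0 < z i * z (j k)) : IsAltChain z p (Function.update j k i) := by
  refine ⟨?_, fun q hq => ?_⟩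
  · rcases k.eq_zero_or_pos with rfl | hk0
    · simpa using left_ne_zero_of_mul hs.ne'
    · simpa [Function.update_of_ne hk0.ne] using h.1
  have ⟨hlt, hneg⟩ := h.2 q hq
  by_cases hqk : q = k
  · subst hqk
    simpa [Function.update_of_ne (show q + 1 ≠ q by omega)] using
      ⟨hhi hq, by nlinarith [mul_self_nonneg (z (j q))]⟩
  by_cases hqk' : q + 1 = k
  · subst hqk'
    simpa [Function.update_of_ne hqk] using
      ⟨hlo q rfl, by nlinarith [mul_self_nonneg (z (j (q + 1)))]⟩
  · simpa [Function.update_of_ne hqk, Function.update_of_ne hqk'] using h.2 q hq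

end Chains

section Blocks

variable {z : Fin n → ℝ} {s p : ℕ} {j : ℕ → Fin n}

/-- The index `q ≤ s` of the block `[j q, j (q + 1))` containing `i`; the first block extends to
the left and the last one to the right. -/
def blockIndex (j : ℕ → Fin n) (s : ℕ) (i : Fin n) : ℕ := Nat.findGreatest (fun q => j q ≤ i) s

theorem blockIndex_le (i : Fin n) : blockIndex j s i ≤ s := Nat.findGreatest_le s

theorem blockIndex_mono : Monotone (blockIndex j s) := fun _ _ hii' =>
  Nat.findGreatest_mono_left (fun _ hq => hq.trans hii') s

theorem blockIndex_apply (hj : StrictMonoOn j (Iic s)) (hp : p ≤ s) : blockIndex j s (j p) = p :=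
  Nat.findGreatest_eq_iff.2 ⟨hp, fun _ => le_rfl, fun _ hpq hq => not_le.2 (hj hp hq hpq)⟩

theorem apply_blockIndex_le {i : Fin n} (h : blockIndex j s i ≠ 0) : j (blockIndex j s i) ≤ i :=
  Nat.findGreatest_of_ne_zero (P := fun q => j q ≤ i) rfl h

theorem lt_apply_of_blockIndex_lt {i : Fin n} {q : ℕ} (h : blockIndex j s i < q) (hq : q ≤ s) :
    i < j q :=
  not_le.1 (Nat.findGreatest_is_greatest (P := fun q => j q ≤ i) h hq)

theorem exists_isAltChain_signVar_sum_le (hz : z ≠ 0) :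
    ∃ j, IsAltChain z (signVar z) j ∧ ∀ j', IsAltChain z (signVar z) j' →
      ∑ q ∈ Finset.range (signVar z + 1), (j q : ℕ) ≤
        ∑ q ∈ Finset.range (signVar z + 1), (j' q : ℕ) := by
  classical
  have hex : ∃ m j, IsAltChain z (signVar z) j ∧
      ∑ q ∈ Finset.range (signVar z + 1), (j q : ℕ) = m :=
    (exists_isAltChain_signVar hz).elim fun j hj => ⟨_, j, hj, rfl⟩
  obtain ⟨j, hj, hsum⟩ := Nat.find_spec hex
  exact ⟨j, hj, fun j' hj' => hsum ▸ Nat.find_min' hex ⟨j', hj', rfl⟩⟩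

/-- For the maximal alternating chain with the smallest positions, the blocks are sign-constant:
a violation would allow a longer chain or one with smaller positions. -/
theorem exists_isAltChain_signVar_blockIndex (hz : z ≠ 0) :
    ∃ j, IsAltChain z (signVar z) j ∧
      ∀ i, z i ≠ 0 → 0 < z i * z (j (blockIndex j (signVar z) i)) := by
  obtain ⟨j, hj, hmin⟩ := exists_isAltChain_signVar_sum_le hz
  refine ⟨j, hj, fun i hi => ?_⟩
  set s := signVar z
  obtain ⟨b, hb⟩ : ∃ b, blockIndex j s i = b := ⟨_, rfl⟩
  have hbs : b ≤ s := hb ▸ blockIndex_le i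
  have hjb : b ≠ 0 → j b ≤ i := hb ▸ apply_blockIndex_le
  have hnext : b < s → i < j (b + 1) := lt_apply_of_blockIndex_lt (hb ▸ Nat.lt_succ_self b)
  rw [hb]
  by_contra hpos
  have hneg : z i * z (j b) < 0 :=
    lt_of_le_of_ne (not_lt.1 hpos) (mul_ne_zero hi (hj.ne_zero hbs))
  rcases lt_or_ge i (j 0) with hi0 | hi0
  · have hb0 : b = 0 := by
      by_contra hb0
      exact (hjb hb0).not_gt (hi0.trans_le (hj.strictMonoOn.monotoneOn (by simp) hbs b.zero_le))
    have := (hj.cons hi0 (hb0 ▸ hneg)).le_signVar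
    omega
  have hbi : j b < i := by
    refine lt_of_le_of_ne ?_ fun h => by rw [h] at hneg; exact (mul_self_nonneg _).not_gt hneg
    rcases eq_or_ne b 0 with rfl | hb0
    · exact hi0
    · exact hjb hb0
  rcases hbs.lt_or_eq with hbs | rfl
  · have hupd := hj.update hbs (fun q hq => by rwa [Nat.add_right_cancel hq])
      (fun h => (hnext hbs).trans (hj.2 _ h).1)
      (by nlinarith [(hj.2 b hbs).2, mul_self_nonneg (z (j b))])
    refine (hmin _ hupd).not_gt (Finset.sum_lt_sum (fun q _ => ?_) ⟨b + 1, by simp; omega, ?_⟩)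
    · rcases eq_or_ne q (b + 1) with rfl | hq
      · rw [Function.update_self]; exact (hnext hbs).le
      · rw [Function.update_of_ne hq]
    · rw [Function.update_self]; exact hnext hbs
  · have := (hj.snoc hbi (by linarith [mul_comm (z i) (z (j s))])).le_signVar
    omega

def HasOrderedSupports (Y : Matrix (Fin n) (Fin m) ℝ) : Prop :=
  (∀ i p, 0 ≤ Y i p) ∧ (∀ p, ∃ i, 0 < Y i p) ∧
    ∀ i i' p p', p < p' → Y i p ≠ 0 → Y i' p' ≠ 0 → i < i'

/-- Column `p` of `Y` is `z / z (j p)` on the `p`-th sign block of `z` and `x p = z (j p)`, for a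
maximal alternating chain `j` as above. -/
theorem exists_hasOrderedSupports_mulVec_eq (hz : z ≠ 0) :
    ∃ (Y : Matrix (Fin n) (Fin (signVar z + 1)) ℝ) (x : Fin (signVar z + 1) → ℝ),
      HasOrderedSupports Y ∧ Y *ᵥ x = z ∧
        ∀ i₀, z i₀ ≠ 0 → (∀ t < i₀, z t = 0) → 0 < z i₀ * x 0 := by
  obtain ⟨j, hj, hsign⟩ := exists_isAltChain_signVar_blockIndex hz
  set s := signVar z
  refine ⟨of fun i p => if blockIndex j s i = p then z i / z (j p) else 0, fun p => z (j p),
    ⟨fun i p => ?_, fun p => ⟨j p, ?_⟩, fun i i' p p' hpp' hi hi' => ?_⟩, ?_,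
    fun i₀ hi₀ hfirst => ?_⟩
  · simp only [of_apply]
    split_ifs with hip
    · rcases eq_or_ne (z i) 0 with h0 | h0
      · simp [h0]
      · exact (div_pos_iff.2 (mul_pos_iff.1 (hip ▸ hsign i h0))).le
    · exact le_rfl
  · simp [blockIndex_apply hj.strictMonoOn (Nat.lt_succ_iff.1 p.2),
      div_self (hj.ne_zero (Nat.lt_succ_iff.1 p.2))]
  · have hblock {i p} (h : (if blockIndex j s i = (p : ℕ) then z i / z (j p) else 0) ≠ 0) :
        blockIndex j s i = p := by
      by_contra hne
      exact h (by simp [hne])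
    by_contra hii'
    have := blockIndex_mono (j := j) (s := s) (not_lt.1 hii')
    rw [hblock hi, hblock hi'] at this
    exact this.not_gt hpp'
  · ext i
    rw [mulVec, dotProduct,
      Finset.sum_eq_single ⟨blockIndex j s i, Nat.lt_succ_of_le (blockIndex_le i)⟩
        (fun p _ hp => by simp [show blockIndex j s i ≠ p from fun h => hp (Fin.ext h.symm)])
        (by simp)]
    simp [div_mul_cancel₀ _ (hj.ne_zero (blockIndex_le (j := j) i))]
  · have hb₀ : blockIndex j s i₀ = 0 := by
      by_contra hb
      refine hj.1 (hfirst _ ((hj.strictMonoOn (by simp) (blockIndex_le i₀)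
        (Nat.pos_of_ne_zero hb)).trans_le (apply_blockIndex_le hb)))
    simpa [hb₀] using hsign i₀ hi₀

end Blocks

section TotallyPositive

theorem Matrix.det_mul_eq_sum_det_submatrix {R ι κ : Type*} [CommRing R] [Fintype ι]
    [DecidableEq ι] [Fintype κ] [DecidableEq κ] (M : Matrix ι κ R) (P : Matrix κ ι R) :
    (M * P).det = ∑ g : ι → κ, (∏ u, P (g u) u) * (M.submatrix id g).det := by
  have hrows : (M * P)ᵀ = fun u => ∑ k, P k u • Mᵀ k := by
    ext u t
    simp [Matrix.mul_apply, Finset.sum_apply, mul_comm]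
  rw [← det_transpose, hrows]
  change detRowAlternating.toMultilinearMap _ = _
  rw [MultilinearMap.map_sum]
  refine Finset.sum_congr rfl fun g _ => ?_
  rw [MultilinearMap.map_smul_univ, smul_eq_mul, ← det_transpose (M.submatrix _ _)]
  rfl

theorem IsTP.submatrix {A : Matrix (Fin N) (Fin n) ℝ} (hA : IsTP A) {r c : ℕ}
    {rows : Fin r → Fin N} {cols : Fin c → Fin n} (hrows : StrictMono rows)
    (hcols : StrictMono cols) : IsTP (A.submatrix rows cols) := fun k rows' cols' hr hc => by
  simpa using hA k _ _ (hrows.comp hr) (hcols.comp hc)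

theorem IsTP.det_pos {A : Matrix (Fin n) (Fin n) ℝ} (hA : IsTP A) : 0 < A.det := by
  simpa using hA n id id strictMono_id strictMono_id

theorem IsTP.mulVec_ne_zero {A : Matrix (Fin n) (Fin n) ℝ} (hA : IsTP A) {v : Fin n → ℝ}
    (hv : v ≠ 0) : A *ᵥ v ≠ 0 :=
  fun h => hv (eq_zero_of_mulVec_eq_zero hA.det_pos.ne' h)

/-- Expanding the minors of `A * Y` by multilinearity leaves only minors of `A` with increasing
columns, with nonnegative weights, not all zero. -/
theorem IsTP.mul_of_hasOrderedSupports {A : Matrix (Fin N) (Fin n) ℝ} (hA : IsTP A)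
    {Y : Matrix (Fin n) (Fin m) ℝ} (hY : HasOrderedSupports Y) : IsTP (A * Y) := by
  obtain ⟨hY, hcol, hsep⟩ := hY
  intro r rows cols hrows hcols
  choose g hg using hcol
  have hmono : ∀ g' : Fin r → Fin n, (∀ u, Y (g' u) (cols u) ≠ 0) → StrictMono g' :=
    fun g' hg' u u' huu' => hsep _ _ _ _ (hcols huu') (hg' u) (hg' u')
  rw [submatrix_mul _ _ _ _ _ Function.bijective_id, det_mul_eq_sum_det_submatrix]
  refine Finset.sum_pos' (fun g' _ => ?_) ⟨g ∘ cols, Finset.mem_univ _, ?_⟩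
  · by_cases hg' : ∀ u, Y (g' u) (cols u) ≠ 0
    · exact (mul_pos (Finset.prod_pos fun u _ => (hY _ _).lt_of_ne' (hg' u))
        (hA r rows g' hrows (hmono g' hg'))).le
    · push Not at hg'
      obtain ⟨u, hu⟩ := hg'
      rw [Finset.prod_eq_zero (Finset.mem_univ u) (by simpa using hu), zero_mul]
  · exact mul_pos (Finset.prod_pos fun u _ => hg _)
      (hA r rows _ hrows (hmono _ fun u => (hg _).ne'))

theorem Matrix.cramer_mulVec {R k : Type*} [CommRing R] [Fintype k] [DecidableEq k]
    (B : Matrix k k R) (x : k → R) : cramer B (B *ᵥ x) = B.det • x := by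
  rw [cramer_eq_adjugate_mulVec, mulVec_mulVec, adjugate_mul, smul_mulVec, one_mulVec]

/-- By Cramer's rule `det B * x 0` is the alternating sum of the entries of `B *ᵥ x` weighted by
positive minors. -/
theorem IsTP.pos_mul_of_weakAlt {B : Matrix (Fin (m + 1)) (Fin (m + 1)) ℝ} (hB : IsTP B)
    {x : Fin (m + 1) → ℝ} (hx : x ≠ 0) {σ : ℝ} (hσ : σ ≠ 0)
    (halt : ∀ q : Fin (m + 1), 0 ≤ σ * (-1) ^ (q : ℕ) * (B *ᵥ x) q) : 0 < σ * x 0 := by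
  have hminor (q : Fin (m + 1)) : 0 < (B.submatrix q.succAbove (Fin.succAbove 0)).det :=
    (hB.submatrix (Fin.strictMono_succAbove q) (Fin.strictMono_succAbove 0)).det_pos
  have hcramer : B.det * x 0 =
      ∑ q : Fin (m + 1),
        (-1) ^ (q : ℕ) * (B *ᵥ x) q * (B.submatrix q.succAbove (Fin.succAbove 0)).det := by
    have := congrFun (cramer_mulVec B x) 0
    rw [cramer_apply, det_succ_column _ 0] at this
    simp only [updateCol_self, submatrix_updateCol_succAbove, Fin.val_zero, add_zero,
      Pi.smul_apply, smul_eq_mul] at this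
    exact this.symm
  obtain ⟨q₀, hq₀⟩ := Function.ne_iff.1 (hB.mulVec_ne_zero hx)
  have hsum : 0 < σ * (B.det * x 0) := by
    rw [hcramer, Finset.mul_sum]
    refine Finset.sum_pos' (fun q _ => ?_) ⟨q₀, Finset.mem_univ _, ?_⟩
    · rw [← mul_assoc, ← mul_assoc]
      exact mul_nonneg (halt q) (hminor q).le
    · rw [← mul_assoc, ← mul_assoc]
      refine mul_pos ((halt q₀).lt_of_ne' ?_) (hminor q₀)
      exact mul_ne_zero (mul_ne_zero hσ (pow_ne_zero _ (by norm_num))) hq₀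
  rw [mul_left_comm] at hsum
  exact pos_of_mul_pos_right hsum hB.det_pos.le

end TotallyPositive

section VariationDiminishing

variable {A : Matrix (Fin N) (Fin n) ℝ} {z : Fin n → ℝ}

/-- Grouping the columns of `A` along the sign blocks of `z` writes `A *ᵥ z = (A * Y) *ᵥ x` with
`A * Y` totally positive and `x` of length `S⁻(z) + 1`. -/
theorem IsTP.pos_mul_of_weakAlt_mulVec (hA : IsTP A) {i₀ : Fin n} (hi₀ : z i₀ ≠ 0)
    (hfirst : ∀ t < i₀, z t = 0) {r : ℕ → Fin N} (hr : StrictMonoOn r (Iic (signVar z)))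
    {σ : ℝ} (hσ : σ ≠ 0) (halt : ∀ q ≤ signVar z, 0 ≤ σ * (-1) ^ q * (A *ᵥ z) (r q)) :
    0 < σ * z i₀ := by
  obtain ⟨Y, x, hY, hYx, hx₀⟩ := exists_hasOrderedSupports_mulVec_eq (Function.ne_iff.2 ⟨i₀, hi₀⟩)
  have hzx := hx₀ i₀ hi₀ hfirst
  set r' : Fin (signVar z + 1) → Fin N := fun q => r q
  have hr' : StrictMono r' := fun q q' hqq' =>
    hr (Nat.lt_succ_iff.1 q.2) (Nat.lt_succ_iff.1 q'.2) hqq'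
  have hBx : (A * Y).submatrix r' id *ᵥ x = fun q : Fin (signVar z + 1) => (A *ᵥ z) (r q) := by
    ext q
    change ((A * Y) *ᵥ x) (r q) = _
    rw [← mulVec_mulVec, hYx]
  have hσx := ((hA.mul_of_hasOrderedSupports hY).submatrix hr' strictMono_id).pos_mul_of_weakAlt
    (x := x) (fun h => by simp [h] at hzx) hσ fun q => by
      simpa only [hBx] using halt q (Nat.lt_succ_iff.1 q.2)
  nlinarith [mul_pos hσx hzx, mul_self_nonneg (x 0)]

theorem exists_ne_zero_forall_lt_eq_zero (hz : z ≠ 0) : ∃ i₀, z i₀ ≠ 0 ∧ ∀ t < i₀, z t = 0 := by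
  obtain ⟨i₀, hi₀, hmin⟩ := wellFounded_lt.has_min {i | z i ≠ 0} (Function.ne_iff.1 hz)
  exact ⟨i₀, hi₀, fun t ht => not_not.1 fun h => hmin t h ht⟩

/-- This is `S⁺(A z) ≤ S⁻(z)`. -/
theorem IsTP.not_weakAlt_mulVec (hA : IsTP A) (hz : z ≠ 0) {r : ℕ → Fin N}
    (hr : StrictMonoOn r (Iic (signVar z + 1))) {σ : ℝ} (hσ : σ ≠ 0)
    (halt : ∀ q ≤ signVar z + 1, 0 ≤ σ * (-1) ^ q * (A *ᵥ z) (r q)) : False := by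
  obtain ⟨i₀, hi₀, hfirst⟩ := exists_ne_zero_forall_lt_eq_zero hz
  have hpos := hA.pos_mul_of_weakAlt_mulVec hi₀ hfirst (hr.mono (Iic_subset_Iic.2 (by omega))) hσ
    fun q hq => halt q (by omega)
  have hneg := hA.pos_mul_of_weakAlt_mulVec hi₀ hfirst (r := fun q => r (q + 1))
    (fun a ha b hb hab => hr (by simp at ha ⊢; omega) (by simp at hb ⊢; omega) (by omega))
    (neg_ne_zero.2 hσ) fun q hq => by simpa [pow_succ] using halt (q + 1) (by omega)
  linarith

theorem IsTP.signVar_mulVec_le (hA : IsTP A) (hz : z ≠ 0) : signVar (A *ᵥ z) ≤ signVar z :=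
  signVar_le fun p j hj => not_lt.1 fun hp =>
    hA.not_weakAlt_mulVec hz (hj.strictMonoOn.mono (Iic_subset_Iic.2 hp)) hj.1
      fun q hq => (hj.pos_mul (by omega)).le

theorem IsTP.mulVec_apply_zero_ne_zero [NeZero N] (hA : IsTP A) (hz : z ≠ 0)
    (hAz : A *ᵥ z ≠ 0) (heq : signVar (A *ᵥ z) = signVar z) : (A *ᵥ z) 0 ≠ 0 := by
  intro h0
  obtain ⟨j, hj⟩ := exists_isAltChain_signVar hAz
  rw [heq] at hj
  have hj0 : 0 < j 0 := (Fin.pos_iff_ne_zero).2 fun h => hj.1 (h ▸ h0)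
  -- prepend the row `0`, where `A *ᵥ z` vanishes
  refine hA.not_weakAlt_mulVec hz (r := fun q => if q = 0 then 0 else j (q - 1))
    (strictMonoOn_Iic_of_lt_succ fun q hq => ?_) (neg_ne_zero.2 hj.1) fun q hq => ?_
  · rcases q with _ | q
    · simpa using hj0
    · simpa using (hj.2 q (by omega)).1
  · rcases q with _ | q
    · simp [h0]
    · simpa [pow_succ] using (hj.pos_mul (q := q) (by omega)).le

theorem IsTP.mulVec_apply_zero_mul_pos [NeZero N] [NeZero n] (hA : IsTP A) (hz₀ : z 0 ≠ 0)
    (hAz : A *ᵥ z ≠ 0) (heq : signVar (A *ᵥ z) = signVar z) : 0 < (A *ᵥ z) 0 * z 0 := by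
  have hz : z ≠ 0 := Function.ne_iff.2 ⟨0, hz₀⟩
  have hw₀ := hA.mulVec_apply_zero_ne_zero hz hAz heq
  obtain ⟨j, hj⟩ := exists_isAltChain_signVar hAz
  rw [heq] at hj
  have hsame : 0 < (A *ᵥ z) 0 * (A *ᵥ z) (j 0) := by
    rcases eq_or_ne (j 0) 0 with h | h
    · rw [h]; exact mul_self_pos.2 hw₀
    refine (mul_ne_zero hw₀ hj.1).lt_or_gt.resolve_left fun hneg => ?_
    have := (hj.cons ((Fin.pos_iff_ne_zero).2 h) hneg).le_signVar
    omega
  have hj' := hj.update (Nat.zero_le _) (i := 0) (fun q hq => by omega)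
    (fun hs => (Fin.zero_le _).trans_lt (hj.2 0 hs).1) hsame
  refine hA.pos_mul_of_weakAlt_mulVec hz₀ (fun t ht => absurd ht (Fin.not_lt_zero t))
    hj'.strictMonoOn hw₀ fun q hq => ?_
  simpa using (hj'.pos_mul hq).le

end VariationDiminishing

section TPSteps

variable {M : ℕ → Matrix (Fin n) (Fin n) ℝ} {w : ℕ → Fin n → ℝ}

theorem ne_zero_of_isTP_step (hM : ∀ k, IsTP (M k)) (hw : ∀ k, w (k + 1) = M k *ᵥ w k)
    (h₀ : w 0 ≠ 0) (k : ℕ) : w k ≠ 0 := by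
  induction k with
  | zero => exact h₀
  | succ k ih => rw [hw]; exact (hM k).mulVec_ne_zero ih

theorem exists_signVar_succ_eq_of_isTP_step (hM : ∀ k, IsTP (M k))
    (hw : ∀ k, w (k + 1) = M k *ᵥ w k) (h₀ : w 0 ≠ 0) :
    ∃ K, ∀ k ≥ K, signVar (w (k + 1)) = signVar (w k) := by
  have hanti : Antitone fun k => signVar (w k) := antitone_nat_of_succ_le fun k => by
    rw [hw]; exact (hM k).signVar_mulVec_le (ne_zero_of_isTP_step hM hw h₀ k)
  obtain ⟨K, hK⟩ := WellFoundedLT.antitone_chain_condition hanti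
  exact ⟨K, fun k hk => (hK (k + 1) (by omega)).symm.trans (hK k hk)⟩

/-- Otherwise `S⁻` would drop at every step. -/
theorem eq_zero_of_isTP_step_of_apply_zero [NeZero n] (hM : ∀ k, IsTP (M k))
    (hw : ∀ k, w (k + 1) = M k *ᵥ w k) (hzero : ∀ k, w k 0 = 0) : w 0 = 0 := by
  by_contra h₀
  obtain ⟨K, hK⟩ := exists_signVar_succ_eq_of_isTP_step hM hw h₀
  have hne := ne_zero_of_isTP_step hM hw h₀
  refine (hM K).mulVec_apply_zero_ne_zero (hne K) (hw K ▸ hne (K + 1)) ?_ (hw K ▸ hzero (K + 1))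
  rw [← hw]; exact hK K le_rfl

theorem exists_pos_mul_apply_zero_of_isTP_step [NeZero n] (hM : ∀ k, IsTP (M k))
    (hw : ∀ k, w (k + 1) = M k *ᵥ w k) (h₀ : w 0 ≠ 0) :
    ∃ K, ∃ σ : ℝ, ∀ k ≥ K, 0 < σ * w k 0 := by
  obtain ⟨K, hK⟩ := exists_signVar_succ_eq_of_isTP_step hM hw h₀
  have hne := ne_zero_of_isTP_step hM hw h₀
  have hsv (k : ℕ) (hk : K ≤ k) : signVar (M k *ᵥ w k) = signVar (w k) := hw k ▸ hK k hk
  have hfirst (k : ℕ) (hk : K ≤ k) : w (k + 1) 0 ≠ 0 :=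
    hw k ▸ (hM k).mulVec_apply_zero_ne_zero (hne k) (hw k ▸ hne (k + 1)) (hsv k hk)
  refine ⟨K + 1, w (K + 1) 0, fun k hk => ?_⟩
  induction k, hk using Nat.le_induction with
  | base => exact mul_self_pos.2 (hfirst K le_rfl)
  | succ k hk ih =>
    have hk0 : w k 0 ≠ 0 := by
      simpa [Nat.sub_add_cancel (show 1 ≤ k by omega)] using hfirst (k - 1) (by omega)
    have hstep := (hM k).mulVec_apply_zero_mul_pos hk0 (hw k ▸ hne (k + 1)) (hsv k (by omega))
    rw [← hw] at hstep
    nlinarith [mul_self_nonneg (w k 0)]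

end TPSteps

section Topology

variable {X : Type*} [TopologicalSpace X]

theorem MapClusterPt.eq_of_tendsto [T2Space X] {α : Type*} {F : Filter α} {u : α → X} {p c : X}
    (hp : MapClusterPt p F u) (hu : Tendsto u F (𝓝 c)) : p = c :=
  eq_of_nhds_neBot (hp.clusterPt.mono hu)

theorem MapClusterPt.iterate_of_orbit {f : X → X} (hf : Continuous f) {x : ℕ → X}
    (hxs : ∀ k, x (k + 1) = f (x k)) {p : X} (hp : MapClusterPt p atTop x) (m : ℕ) :
    MapClusterPt (f^[m] p) atTop x := by
  induction m with
  | zero => exact hp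
  | succ m ih =>
    have hshift : f ∘ x = x ∘ (· + 1) := funext fun k => (hxs k).symm
    rw [Function.iterate_succ_apply']
    exact .of_comp (tendsto_add_atTop_nat 1) (hshift ▸ ih.continuousAt_comp hf.continuousAt)

theorem exists_tendsto_of_bddAbove_of_le_succ {u : ℕ → ℝ} (hu : BddAbove (range u)) {K : ℕ}
    (hmono : ∀ k ≥ K, u k ≤ u (k + 1)) : ∃ c, Tendsto u atTop (𝓝 c) := by
  have hmono' : Monotone fun k => u (k + K) := monotone_nat_of_le_succ fun k => by
    simpa [add_right_comm] using hmono (k + K) (by omega)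
  exact ⟨_, (tendsto_add_atTop_iff_nat K).1 (tendsto_atTop_ciSup hmono'
    (hu.mono (range_subset_iff.2 fun k => mem_range_self _)))⟩

end Topology

section Orbits

variable {Ω : Set (Fin n → ℝ)} {f : (Fin n → ℝ) → Fin n → ℝ}

def HasTPSecants (f : (Fin n → ℝ) → Fin n → ℝ) (Ω : Set (Fin n → ℝ)) : Prop :=
  ∀ u ∈ Ω, ∀ v ∈ Ω, ∃ M : Matrix (Fin n) (Fin n) ℝ, IsTP M ∧ f u - f v = M *ᵥ (u - v)

theorem HasTPSecants.exists_isTP_step (hf : HasTPSecants f Ω) {u v : ℕ → Fin n → ℝ}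
    (hu : ∀ k, u k ∈ Ω) (hv : ∀ k, v k ∈ Ω) (hus : ∀ k, u (k + 1) = f (u k))
    (hvs : ∀ k, v (k + 1) = f (v k)) :
    ∃ M : ℕ → Matrix (Fin n) (Fin n) ℝ, (∀ k, IsTP (M k)) ∧
      ∀ k, u (k + 1) - v (k + 1) = M k *ᵥ (u k - v k) := by
  choose M hM hMeq using fun k => hf (u k) (hu k) (v k) (hv k)
  exact ⟨M, hM, fun k => by rw [hus, hvs]; exact hMeq k⟩

theorem HasTPSecants.eq_of_forall_apply_zero_eq [NeZero n] (hf : HasTPSecants f Ω)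
    {u v : ℕ → Fin n → ℝ} (hu : ∀ k, u k ∈ Ω) (hv : ∀ k, v k ∈ Ω)
    (hus : ∀ k, u (k + 1) = f (u k)) (hvs : ∀ k, v (k + 1) = f (v k))
    (h : ∀ k, u k 0 = v k 0) : u 0 = v 0 := by
  obtain ⟨M, hM, hMeq⟩ := hf.exists_isTP_step hu hv hus hvs
  exact sub_eq_zero.1 (eq_zero_of_isTP_step_of_apply_zero (w := fun k => u k - v k) hM hMeq
    fun k => by simp [h k])

theorem HasTPSecants.exists_tendsto_apply_zero [NeZero n] (hΩ : IsCompact Ω)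
    (hf : HasTPSecants f Ω) {x : ℕ → Fin n → ℝ} (hxΩ : ∀ k, x k ∈ Ω)
    (hxs : ∀ k, x (k + 1) = f (x k)) (hx : x 1 ≠ x 0) :
    ∃ c₀, Tendsto (fun k => x k 0) atTop (𝓝 c₀) := by
  obtain ⟨M, hM, hMeq⟩ := hf.exists_isTP_step (u := fun k => x (k + 1)) (fun k => hxΩ _) hxΩ
    (fun k => hxs _) hxs
  obtain ⟨K, σ, hσ⟩ := exists_pos_mul_apply_zero_of_isTP_step (w := fun k => x (k + 1) - x k)
    hM hMeq (sub_ne_zero.2 hx)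
  have hσ0 : σ ≠ 0 := left_ne_zero_of_mul (hσ K le_rfl).ne'
  have hbdd : BddAbove (range fun k => σ * x k 0) := by
    refine (hΩ.image (f := fun y => σ * y 0) (by fun_prop)).bddAbove.mono ?_
    exact range_subset_iff.2 fun k => ⟨x k, hxΩ k, rfl⟩
  obtain ⟨c, hc⟩ := exists_tendsto_of_bddAbove_of_le_succ hbdd (K := K) fun k hk => by
    have := hσ k hk
    simp only [Pi.sub_apply] at this
    nlinarith
  exact ⟨σ⁻¹ * c, by simpa [inv_mul_cancel_left₀ hσ0] using hc.const_mul σ⁻¹⟩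

theorem HasTPSecants.map_eq_of_mapClusterPt [NeZero n] (hΩ : IsClosed Ω) (hfc : Continuous f)
    (hf : HasTPSecants f Ω) {x : ℕ → Fin n → ℝ} (hxΩ : ∀ k, x k ∈ Ω)
    (hxs : ∀ k, x (k + 1) = f (x k)) {c₀ : ℝ} (hc₀ : Tendsto (fun k => x k 0) atTop (𝓝 c₀))
    {p : Fin n → ℝ} (hp : MapClusterPt p atTop x) : f p = p := by
  have hiter := hp.iterate_of_orbit hfc hxs
  have hmem (m : ℕ) : f^[m] p ∈ Ω := hΩ.mem_of_mapClusterPt (hiter m) (.of_forall hxΩ)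
  have hfirst (m : ℕ) : (f^[m] p) 0 = c₀ :=
    ((hiter m).continuousAt_comp (continuous_apply 0).continuousAt).eq_of_tendsto hc₀
  simpa using hf.eq_of_forall_apply_zero_eq (u := fun m => f^[m + 1] p) (v := fun m => f^[m] p)
    (fun m => hmem _) hmem (fun m => Function.iterate_succ_apply' f _ p)
    (fun m => Function.iterate_succ_apply' f _ p) fun m => (hfirst _).trans (hfirst m).symm

theorem HasTPSecants.exists_tendsto_fixedPoint (hΩ : IsCompact Ω) (hfc : Continuous f)
    (hinv : ∀ a ∈ Ω, f a ∈ Ω) (hf : HasTPSecants f Ω) {x : ℕ → Fin n → ℝ} (hx0 : x 0 ∈ Ω)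
    (hxs : ∀ k, x (k + 1) = f (x k)) : ∃ e ∈ Ω, f e = e ∧ Tendsto x atTop (𝓝 e) := by
  have hxΩ (k : ℕ) : x k ∈ Ω := by
    induction k with
    | zero => exact hx0
    | succ k ih => exact hxs k ▸ hinv _ ih
  by_cases hx : x 1 = x 0
  · have hconst (k : ℕ) : x k = x 0 := by
      induction k with
      | zero => rfl
      | succ k ih => rw [hxs, ih, ← hxs, hx]
    exact ⟨x 0, hx0, hxs 0 ▸ hx, tendsto_const_nhds.congr fun k => (hconst k).symm⟩
  have : NeZero n := ⟨fun h => hx (by subst h; exact Subsingleton.elim _ _)⟩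
  obtain ⟨c₀, hc₀⟩ := hf.exists_tendsto_apply_zero hΩ hxΩ hxs hx
  have hfix {p} (hp : MapClusterPt p atTop x) : f p = p :=
    hf.map_eq_of_mapClusterPt hΩ.isClosed hfc hxΩ hxs hc₀ hp
  have hfirst {p} (hp : MapClusterPt p atTop x) : p 0 = c₀ :=
    (hp.continuousAt_comp (continuous_apply 0).continuousAt).eq_of_tendsto hc₀
  obtain ⟨e, he, hcl⟩ := hΩ.exists_mapClusterPt (f := atTop) (tendsto_principal.2 (.of_forall hxΩ))
  refine ⟨e, he, hfix hcl, hΩ.tendsto_nhds_of_unique_mapClusterPt (.of_forall hxΩ)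
    fun p hp hcp => ?_⟩
  exact hf.eq_of_forall_apply_zero_eq (u := fun _ => p) (v := fun _ => e) (fun _ => hp)
    (fun _ => he) (fun _ => (hfix hcp).symm) (fun _ => (hfix hcl).symm)
    fun _ => (hfirst hcp).trans (hfirst hcl).symm

end Orbits

section Jacobian

theorem jac_mulVec (g : (Fin n → ℝ) → Fin n → ℝ) (x v : Fin n → ℝ) :
    jac g x *ᵥ v = fderiv ℝ g x v :=
  LinearMap.toMatrix'_mulVec (fderiv ℝ g x : (Fin n → ℝ) →ₗ[ℝ] Fin n → ℝ) v

theorem sub_eq_integral_jac_mulVec {f : (Fin n → ℝ) → Fin n → ℝ} (hf : ContDiff ℝ 1 f)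
    (a b : Fin n → ℝ) :
    f a - f b = (of fun i j => ∫ r in (0:ℝ)..1, jac f (r • a + (1 - r) • b) i j) *ᵥ (a - b) := by
  set γ : ℝ → Fin n → ℝ := fun r => r • a + (1 - r) • b
  have hγ (r : ℝ) : HasDerivAt γ (a - b) r := by
    have hγ' : γ = fun r => b + r • (a - b) := by
      ext r i
      simp only [γ, Pi.add_apply, Pi.smul_apply, Pi.sub_apply, smul_eq_mul]
      ring
    simpa [hγ'] using ((hasDerivAt_id r).smul_const (a - b)).const_add b
  have hcont : Continuous fun r => fderiv ℝ f (γ r) :=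
    (hf.continuous_fderiv one_ne_zero).comp (by fun_prop)
  have hentry (i j : Fin n) : Continuous fun r => jac f (γ r) i j :=
    (continuous_apply i).comp (hcont.clm_apply continuous_const)
  ext i
  have hftc := intervalIntegral.integral_eq_sub_of_hasDerivAt
    (f := fun r => f (γ r) i) (f' := fun r => fderiv ℝ f (γ r) (a - b) i)
    (fun r _ => hasDerivAt_pi.1
      (((hf.differentiable one_ne_zero) (γ r)).hasFDerivAt.comp_hasDerivAt r (hγ r)) i)
    (((continuous_apply i).comp (hcont.clm_apply continuous_const)).intervalIntegrable 0 1)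
  calc (f a - f b) i = ∫ r in (0:ℝ)..1, fderiv ℝ f (γ r) (a - b) i := by rw [hftc]; simp [γ]
    _ = ∫ r in (0:ℝ)..1, ∑ j, jac f (γ r) i j * (a - b) j := by simp_rw [← jac_mulVec]; rfl
    _ = _ := by
      have hint (j : Fin n) : Continuous fun r => jac f (γ r) i j * (a - b) j :=
        (hentry i j).mul continuous_const
      rw [intervalIntegral.integral_finsetSum fun j _ => (hint j).intervalIntegrable 0 1]
      simp [mulVec, dotProduct, γ, intervalIntegral.integral_mul_const]

end Jacobian

theorem stmt11_general (n : ℕ)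
    (Ω : Set (Fin n → ℝ)) (hΩc : IsCompact Ω)
    (f : (Fin n → ℝ) → (Fin n → ℝ)) (hf : ContDiff ℝ 1 f)
    (hinv : ∀ a ∈ Ω, f a ∈ Ω)
    (hTP : ∀ a ∈ Ω, ∀ b ∈ Ω,
      IsTP (Matrix.of fun i j => ∫ r in (0:ℝ)..1, jac f (r • a + (1 - r) • b) i j))
    (a : Fin n → ℝ) (ha : a ∈ Ω)
    (x : ℕ → Fin n → ℝ) (hx0 : x 0 = a) (hxs : ∀ k, x (k + 1) = f (x k)) :
    ∃ e ∈ Ω, f e = e ∧ Tendsto x atTop (nhds e) :=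
  HasTPSecants.exists_tendsto_fixedPoint hΩc hf.continuous hinv
    (fun u hu v hv => ⟨_, hTP u hu v hv, sub_eq_integral_jac_mulVec hf u v⟩) (hx0 ▸ ha) hxs

theorem stmt11 (n : ℕ)
    (Ω : Set (Fin n → ℝ)) (hΩc : IsCompact Ω) (hΩconv : Convex ℝ Ω)
    (f : (Fin n → ℝ) → (Fin n → ℝ)) (hf : ContDiff ℝ 1 f)
    (hinv : ∀ a ∈ Ω, f a ∈ Ω)
    (hTP : ∀ a ∈ Ω, ∀ b ∈ Ω,
      IsTP (Matrix.of fun i j => ∫ r in (0:ℝ)..1, jac f (r • a + (1 - r) • b) i j))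
    (a : Fin n → ℝ) (ha : a ∈ Ω)
    (x : ℕ → Fin n → ℝ) (hx0 : x 0 = a) (hxs : ∀ k, x (k + 1) = f (x k)) :
    ∃ e ∈ Ω, f e = e ∧ Tendsto x atTop (nhds e) :=
  stmt11_general n Ω hΩc f hf hinv hTP a ha x hx0 hxs
end

section
/- Let A : [0,1] → ℝ^{2×2} be a continuous matrix function such that A(t) is symmetric and TP for every t ∈ [0,1]. Then ∫₀¹ A(t) dt is TP. -/
open Matrix MeasureTheory Filter Topology

/-!
A symmetric TP matrix `[[a, b], [b, c]]` has `c > 0` and `b² < ac`, so the quadratic form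
`a - 2λb + λ²c` is positive for every `λ`. Positivity survives integration, and evaluating the
integrated form at its minimiser `λ = ∫b / ∫c` gives `(∫b)² < (∫a)(∫c)`.
-/

lemma isTP_fin_two_iff (M : Matrix (Fin 2) (Fin 2) ℝ) :
    IsTP M ↔ (∀ i j, 0 < M i j) ∧ 0 < M.det := by
  constructor
  · intro hM
    refine ⟨fun i j => ?_, ?_⟩
    · have h := hM 1 ![i] ![j] (Subsingleton.strictMono _) (Subsingleton.strictMono _)
      rwa [det_fin_one] at h
    · simpa using hM 2 id id strictMono_id strictMono_id
  · rintro ⟨hentries, hdet⟩ (_ | _ | _ | r) rows cols hrows hcols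
    · simp
    · simpa using hentries (rows 0) (cols 0)
    · have hid : ∀ f : Fin 2 → Fin 2, StrictMono f → f = id := by decide
      rwa [hid rows hrows, hid cols hcols, submatrix_id_id]
    · exact absurd (Fintype.card_le_of_injective rows hrows.injective) (by simp)

lemma quadratic_pos_of_sq_lt_mul {a b c : ℝ} (hc : 0 < c) (hdisc : b ^ 2 < a * c) (l : ℝ) :
    0 < a - 2 * l * b + l ^ 2 * c := by
  have hform : c * (a - 2 * l * b + l ^ 2 * c) = (l * c - b) ^ 2 + (a * c - b ^ 2) := by ring
  exact pos_of_mul_pos_right (hform ▸ by positivity) hc.le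

theorem sq_intervalIntegral_lt_mul {f g h : ℝ → ℝ} {a b : ℝ} (hab : a < b)
    (hf : IntervalIntegrable f volume a b) (hg : IntervalIntegrable g volume a b)
    (hh : IntervalIntegrable h volume a b) (hhpos : ∀ t ∈ Set.Ioo a b, 0 < h t)
    (hdisc : ∀ t ∈ Set.Ioo a b, g t ^ 2 < f t * h t) :
    (∫ t in a..b, g t) ^ 2 < (∫ t in a..b, f t) * ∫ t in a..b, h t := by
  set F := ∫ t in a..b, f t
  set G := ∫ t in a..b, g t
  set H := ∫ t in a..b, h t
  have hH : 0 < H := intervalIntegral.intervalIntegral_pos_of_pos_on hh hhpos hab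
  set l := G / H
  have hform : ∫ t in a..b, (f t - 2 * l * g t + l ^ 2 * h t) = F - 2 * l * G + l ^ 2 * H := by
    rw [intervalIntegral.integral_add (hf.sub (hg.const_mul _)) (hh.const_mul _),
      intervalIntegral.integral_sub hf (hg.const_mul _),
      intervalIntegral.integral_const_mul, intervalIntegral.integral_const_mul]
  have hpos : 0 < F - 2 * l * G + l ^ 2 * H := hform ▸
    intervalIntegral.intervalIntegral_pos_of_pos_on
      ((hf.sub (hg.const_mul _)).add (hh.const_mul _))
      (fun t ht => quadratic_pos_of_sq_lt_mul (hhpos t ht) (hdisc t ht) l) hab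
  have hmin : (F - 2 * l * G + l ^ 2 * H) * H = F * H - G ^ 2 := by
    simp only [l]; field_simp; ring
  linarith [hmin ▸ mul_pos hpos hH]

theorem stmt13 (A : ℝ → Matrix (Fin 2) (Fin 2) ℝ)
    (hcont : ∀ i j : Fin 2, Continuous fun t => A t i j)
    (hsym : ∀ t ∈ Set.Icc (0:ℝ) 1, (A t).IsSymm)
    (hTP : ∀ t ∈ Set.Icc (0:ℝ) 1, IsTP (A t)) :
    IsTP (Matrix.of fun i j => ∫ t in (0:ℝ)..1, A t i j) := by
  have hintegrable : ∀ i j, IntervalIntegrable (fun t => A t i j) volume 0 1 :=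
    fun i j => (hcont i j).intervalIntegrable 0 1
  have hTP' : ∀ t ∈ Set.Ioo (0:ℝ) 1, (∀ i j, 0 < A t i j) ∧ 0 < (A t).det :=
    fun t ht => (isTP_fin_two_iff _).1 (hTP t (Set.Ioo_subset_Icc_self ht))
  have hsym_int : ∫ t in (0:ℝ)..1, A t 1 0 = ∫ t in (0:ℝ)..1, A t 0 1 :=
    intervalIntegral.integral_congr fun t ht =>
      (hsym t (by rwa [Set.uIcc_of_le zero_le_one] at ht)).apply 0 1
  refine (isTP_fin_two_iff _).2 ⟨fun i j => ?_, ?_⟩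
  · exact intervalIntegral.intervalIntegral_pos_of_pos_on (hintegrable i j)
      (fun t ht => (hTP' t ht).1 i j) one_pos
  · rw [det_fin_two, of_apply, of_apply, of_apply, of_apply, hsym_int, ← sq, sub_pos]
    refine sq_intervalIntegral_lt_mul one_pos (hintegrable 0 0) (hintegrable 0 1) (hintegrable 1 1)
      (fun t ht => (hTP' t ht).1 1 1) fun t ht => ?_
    have hdet := (hTP' t ht).2
    rw [det_fin_two, (hsym t (Set.Ioo_subset_Icc_self ht)).apply 0 1] at hdet
    linarith [sq (A t 0 1)]
end
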